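/- arXiv:2211.13071 — 2 statements merged into one kernel-verified Lean document; each statement's English description precedes it below -/
import Mathlib

section
/- Let G be a groupoid, R a commutative associative ring, and α = (D_g, α_g)_{g∈G} a partial action of G on R such that D_g is s-unital for every g ∈ G and R = ⊕_{e∈G₀} D_e. Then ⊕_{e∈G₀} D_e δ_e is a maximal commutative subring of R ⋊_α G if, and only if, α has the intersection property. -/
/-!
(⇒) Right multiplication by a suitable `v δ_{g⁻¹}` moves the coefficient at `g` of an element
of an ideal `I` to the unit `r g` without enlarging the support. So a nonzero `I` contains
elements with a nonzero coefficient at a unit; take one, `w`, of smallest support. If `w` did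
not commute with some `d ∈ ⊕ D_e δ_e`, the commutator `d w - w d` would be a nonzero element of
`I` vanishing at all units, hence with smaller support than `w`, and moving one of its
coefficients to a unit would contradict minimality. So `w` centralizes, hence lies in,
`⊕ D_e δ_e`.

(⇐) `⊕ D_e δ_e` is commutative because `R` is. If `b` centralizes it and `b_g ≠ 0` with
`g ∉ G₀`, then `s g = r g` and `α_g(α_{g⁻¹}(b_g) u) = u b_g` for `u ∈ D_{r g}`. The additive map
`Σ a_h δ_h ↦ Σ a_h δ_{r h}` is the identity on `⊕ D_e δ_e`, and these relations make
`b_g δ_{r g} - b_g δ_g` lie in an ideal inside its kernel (associativity of `R ⋊_α G`, which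
uses s-unitality, is what makes it an ideal), contradicting the intersection property.
-/

open scoped Classical

/-- A (discrete) groupoid, presented as its set of morphisms `G`, with source map `s`,
range map `r`, inversion `inv` and a partially defined multiplication `mul`.
The units (identity morphisms, i.e. the objects) are the elements `e` with `r e = e`. -/
structure DGroupoid (G : Type*) where
  s : G → G
  r : G → G
  inv : G → G
  mul : (g h : G) → s g = r h → G
  s_inv : ∀ g, s (inv g) = r g
  r_inv : ∀ g, r (inv g) = s g
  inv_inv : ∀ g, inv (inv g) = g
  r_mul : ∀ g h (p : s g = r h), r (mul g h p) = r g
  s_mul : ∀ g h (p : s g = r h), s (mul g h p) = s h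
  r_idem : ∀ g, r (r g) = r g
  s_of_r : ∀ g, s (r g) = r g
  r_of_s : ∀ g, r (s g) = s g
  s_idem : ∀ g, s (s g) = s g
  assoc : ∀ g h k (p : s g = r h) (q : s h = r k) (pq : s (mul g h p) = r k)
      (qp : s g = r (mul h k q)), mul (mul g h p) k pq = mul g (mul h k q) qp
  id_mul : ∀ g (p : s (r g) = r g), mul (r g) g p = g
  mul_id : ∀ g (p : s g = r (s g)), mul g (s g) p = g
  mul_inv : ∀ g (p : s g = r (inv g)), mul g (inv g) p = r g
  inv_mul : ∀ g (p : s (inv g) = r g), mul (inv g) g p = s g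

namespace DGroupoid

/-- `e` is a unit (an object, identified with its identity morphism) of the groupoid. -/
def unit {G : Type*} (𝔾 : DGroupoid G) (e : G) : Prop := 𝔾.r e = e

end DGroupoid

section RingDefs

variable {R : Type*} [NonUnitalRing R]

/-- A subset of a (possibly non-unital) ring is a two-sided ideal. -/
def IsRingIdeal (J : Set R) : Prop :=
  (0 : R) ∈ J ∧ (∀ x ∈ J, ∀ y ∈ J, x + y ∈ J) ∧ (∀ x ∈ J, -x ∈ J) ∧
    ∀ x ∈ J, ∀ y : R, x * y ∈ J ∧ y * x ∈ J

/-- A subset of a ring, viewed as a ring, is s-unital: every `x` in it lies in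
`xT ∩ Tx`. -/
def IsSUnitalSet (J : Set R) : Prop :=
  ∀ x ∈ J, (∃ u ∈ J, x * u = x) ∧ (∃ v ∈ J, v * x = x)

end RingDefs

/-- A partial action `α = (D_g, α_g)_{g ∈ G}` of a groupoid `𝔾` on a
(possibly non-unital, associative) ring `R`:  each `D_{r g}` is a two-sided ideal of `R`,
each `D_g` is a two-sided ideal of `D_{r g}`, and `α_g = act g` restricts to a ring
isomorphism `D_{g⁻¹} → D_g` (the function `act g` is arbitrary outside `D_{g⁻¹}`),
satisfying the axioms of a partial action. -/
structure PartialAction {G : Type*} (𝔾 : DGroupoid G) (R : Type*) [NonUnitalRing R] where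
  D : G → Set R
  zero_mem : ∀ g, (0 : R) ∈ D g
  add_mem : ∀ g, ∀ x ∈ D g, ∀ y ∈ D g, x + y ∈ D g
  neg_mem : ∀ g, ∀ x ∈ D g, -x ∈ D g
  subset_r : ∀ g, D g ⊆ D (𝔾.r g)
  idealR : ∀ g, IsRingIdeal (D (𝔾.r g))
  idealInR : ∀ g, ∀ x ∈ D g, ∀ y ∈ D (𝔾.r g), x * y ∈ D g ∧ y * x ∈ D g
  act : G → R → R
  act_mem : ∀ g, ∀ x ∈ D (𝔾.inv g), act g x ∈ D g
  act_add : ∀ g, ∀ x ∈ D (𝔾.inv g), ∀ y ∈ D (𝔾.inv g), act g (x + y) = act g x + act g y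
  act_mul : ∀ g, ∀ x ∈ D (𝔾.inv g), ∀ y ∈ D (𝔾.inv g), act g (x * y) = act g x * act g y
  act_inv : ∀ g, ∀ x ∈ D (𝔾.inv g), act (𝔾.inv g) (act g x) = x
  act_unit : ∀ e, 𝔾.unit e → ∀ x ∈ D e, act e x = x
  act_comp_mem : ∀ g h (p : 𝔾.s g = 𝔾.r h), ∀ x, x ∈ D (𝔾.inv g) → x ∈ D h →
      act (𝔾.inv h) x ∈ D (𝔾.inv (𝔾.mul g h p))
  act_comp : ∀ g h (p : 𝔾.s g = 𝔾.r h), ∀ x ∈ D (𝔾.inv h), act h x ∈ D (𝔾.inv g) →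
      act g (act h x) = act (𝔾.mul g h p) x

namespace PartialAction

variable {G : Type*} {R : Type*} [NonUnitalRing R] {𝔾 : DGroupoid G} (P : PartialAction 𝔾 R)

/-- `R = ⊕_{e ∈ G₀} D_e`: every element of `R` decomposes as a finite sum of elements
of the `D_e` (`e` a unit), and the decomposition is unique (a finite sum of elements of
the distinct `D_e`'s which vanishes has all terms zero). -/
def directSum : Prop :=
  (∀ x : R, ∃ f : G →₀ R, (∀ g ∈ f.support, 𝔾.unit g) ∧ (∀ g, f g ∈ P.D g) ∧
      (f.sum fun _ v => v) = x) ∧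
    ∀ f : G →₀ R, (∀ g ∈ f.support, 𝔾.unit g) → (∀ g, f g ∈ P.D g) →
      (f.sum fun _ v => v) = 0 → f = 0

/-- The carrier of the partial skew groupoid ring `R ⋊_α G`: finitely supported
functions `a : G →₀ R` (thought of as `Σ_g a_g δ_g`) with `a g ∈ D g`. -/
def carrier : Set (G →₀ R) := {a | ∀ g, a g ∈ P.D g}

/-- The multiplication of the partial skew groupoid ring:
`(a_g δ_g)(b_h δ_h) = α_g(α_{g⁻¹}(a_g) b_h) δ_{gh}` when `(g,h)` is composable,
and `0` otherwise. -/
noncomputable def skewMul (a b : G →₀ R) : G →₀ R :=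
  a.support.sum fun g => b.support.sum fun h =>
    if p : 𝔾.s g = 𝔾.r h then
      Finsupp.single (𝔾.mul g h p) (P.act g (P.act (𝔾.inv g) (a g) * b h))
    else 0

/-- The subset `⊕_{e ∈ G₀} D_e δ_e` of `R ⋊_α G`: elements supported on units. -/
def diag : Set (G →₀ R) := {a | (∀ g, a g ∈ P.D g) ∧ ∀ g ∈ a.support, 𝔾.unit g}

/-- `I` is a two-sided ideal of the partial skew groupoid ring `R ⋊_α G`. -/
def IsSkewIdeal (I : Set (G →₀ R)) : Prop :=
  I ⊆ P.carrier ∧ (0 : G →₀ R) ∈ I ∧ (∀ x ∈ I, ∀ y ∈ I, x + y ∈ I) ∧ (∀ x ∈ I, -x ∈ I) ∧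
    ∀ x ∈ I, ∀ y ∈ P.carrier, P.skewMul x y ∈ I ∧ P.skewMul y x ∈ I

/-- The projection `P₀ : R ⋊_α G → R`, `Σ_g a_g δ_g ↦ Σ_{e ∈ G₀} a_e`. -/
noncomputable def P0 (_P : PartialAction 𝔾 R) (a : G →₀ R) : R :=
  a.sum fun g v => if 𝔾.unit g then v else 0

/-- An ideal `I` of `R ⋊_α G` is `G`-graded if it is generated by its homogeneous
components, i.e. `I = ⊕_g (I ∩ D_g δ_g)`. -/
def IsGradedIdeal (I : Set (G →₀ R)) : Prop :=
  P.IsSkewIdeal I ∧ ∀ a ∈ I, ∀ g : G, Finsupp.single g (a g) ∈ I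

/-- `J` is a `G`-invariant (two-sided) ideal of `R`: `α_g(D_{g⁻¹} ∩ J) ⊆ J`. -/
def IsInvIdeal (J : Set R) : Prop :=
  IsRingIdeal J ∧ ∀ g, ∀ x ∈ P.D (𝔾.inv g) ∩ J, P.act g x ∈ J

/-- The subset `J ⋊_{α^J} G = ⊕_g (J ∩ D_g) δ_g` of `R ⋊_α G` attached to a
`G`-invariant ideal `J` of `R`. -/
def skewOf (J : Set R) : Set (G →₀ R) := {a | ∀ g, a g ∈ P.D g ∩ J}

/-- `⊕_{e ∈ G₀} D_e δ_e` is a maximal commutative subring of `R ⋊_α G`: it is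
commutative and coincides with its centralizer. -/
def IsMaxCommDiag : Prop :=
  (∀ a ∈ P.diag, ∀ b ∈ P.diag, P.skewMul a b = P.skewMul b a) ∧
    ∀ b ∈ P.carrier, (∀ a ∈ P.diag, P.skewMul a b = P.skewMul b a) → b ∈ P.diag

/-- The partial action has the intersection property: every nonzero ideal of
`R ⋊_α G` intersects `⊕_{e ∈ G₀} D_e δ_e` nontrivially. -/
def HasIntersectionProperty : Prop :=
  ∀ I : Set (G →₀ R), P.IsSkewIdeal I → I ≠ {0} → I ∩ P.diag ≠ {0}

/-- `R` is `G`-simple: the only `G`-invariant ideals of `R` are `{0}` and `R`. -/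
def GSimple : Prop := ∀ J : Set R, P.IsInvIdeal J → J = {0} ∨ J = Set.univ

/-- `R` is `G`-prime: if `I, J` are `G`-invariant ideals with `IJ = {0}`, then
`I = {0}` or `J = {0}`. -/
def GPrime : Prop :=
  ∀ I J : Set R, P.IsInvIdeal I → P.IsInvIdeal J →
    (∀ x ∈ I, ∀ y ∈ J, x * y = 0) → I = {0} ∨ J = {0}

/-- `R ⋊_α G` is graded simple. -/
def GradedSimple : Prop :=
  ∀ I : Set (G →₀ R), P.IsGradedIdeal I → I = {0} ∨ I = P.carrier

/-- `R ⋊_α G` is graded prime. -/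
def GradedPrime : Prop :=
  ∀ I J : Set (G →₀ R), P.IsGradedIdeal I → P.IsGradedIdeal J →
    (∀ x ∈ I, ∀ y ∈ J, P.skewMul x y = 0) → I = {0} ∨ J = {0}

/-- `R ⋊_α G` is a prime ring. -/
def SkewPrime : Prop :=
  ∀ I J : Set (G →₀ R), P.IsSkewIdeal I → P.IsSkewIdeal J →
    (∀ x ∈ I, ∀ y ∈ J, P.skewMul x y = 0) → I = {0} ∨ J = {0}

/-- `R ⋊_α G` is a simple ring. -/
def SkewSimple : Prop :=
  ∀ I : Set (G →₀ R), P.IsSkewIdeal I → I = {0} ∨ I = P.carrier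

end PartialAction

lemma Finsupp.eq_sum_support_single {α M : Type*} [AddCommMonoid M] (a : α →₀ M) :
    a = ∑ g ∈ a.support, Finsupp.single g (a g) :=
  (Finsupp.sum_single a).symm

namespace DGroupoid

variable {G : Type*} (𝔾 : DGroupoid G)

lemma unit_r (g : G) : 𝔾.unit (𝔾.r g) := 𝔾.r_idem g

lemma s_eq_self_of_unit {e : G} (he : 𝔾.unit e) : 𝔾.s e = e := by
  have h := 𝔾.s_of_r e
  rwa [he] at h

lemma mul_congr {g g' h h' : G} (hg : g = g') (hh : h = h') (p : 𝔾.s g = 𝔾.r h)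
    (p' : 𝔾.s g' = 𝔾.r h') : 𝔾.mul g h p = 𝔾.mul g' h' p' := by
  subst hg hh
  rfl

lemma mul_of_unit_left {e h : G} (he : 𝔾.unit e) (p : 𝔾.s e = 𝔾.r h) : 𝔾.mul e h p = h :=
  (𝔾.mul_congr ((𝔾.s_eq_self_of_unit he).symm.trans p) rfl p (𝔾.s_of_r h)).trans
    (𝔾.id_mul h _)

lemma mul_of_unit_right {g e : G} (he : 𝔾.unit e) (p : 𝔾.s g = 𝔾.r e) : 𝔾.mul g e p = g :=
  (𝔾.mul_congr rfl (p.trans he).symm p (𝔾.r_of_s g).symm).trans (𝔾.mul_id g _)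

lemma inv_eq_self_of_unit {e : G} (he : 𝔾.unit e) : 𝔾.inv e = e :=
  (𝔾.mul_of_unit_left he (𝔾.r_inv e).symm).symm.trans ((𝔾.mul_inv e _).trans he)

lemma mul_mul_inv (g h : G) (p : 𝔾.s g = 𝔾.r h) (pq : 𝔾.s (𝔾.mul g h p) = 𝔾.r (𝔾.inv h)) :
    𝔾.mul (𝔾.mul g h p) (𝔾.inv h) pq = g := by
  have q : 𝔾.s h = 𝔾.r (𝔾.inv h) := (𝔾.r_inv h).symm
  have qp : 𝔾.s g = 𝔾.r (𝔾.mul h (𝔾.inv h) q) := by rw [𝔾.r_mul]; exact p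
  rw [𝔾.assoc g h (𝔾.inv h) p q pq qp,
    𝔾.mul_congr rfl (𝔾.mul_inv h q) qp (p.trans (𝔾.r_idem h).symm)]
  exact 𝔾.mul_of_unit_right (𝔾.unit_r h) _

lemma eq_of_mul_inv_eq_r {g h : G} (p : 𝔾.s h = 𝔾.r (𝔾.inv g))
    (hh : 𝔾.mul h (𝔾.inv g) p = 𝔾.r g) : h = g := by
  have pq : 𝔾.s (𝔾.mul h (𝔾.inv g) p) = 𝔾.r (𝔾.inv (𝔾.inv g)) := by rw [𝔾.s_mul, 𝔾.r_inv]
  calc h = 𝔾.mul (𝔾.mul h (𝔾.inv g) p) (𝔾.inv (𝔾.inv g)) pq := (𝔾.mul_mul_inv h _ p pq).symm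
    _ = 𝔾.mul (𝔾.r g) g (𝔾.s_of_r g) := 𝔾.mul_congr hh (𝔾.inv_inv g) pq _
    _ = g := 𝔾.id_mul g _

section rangeCollapse

variable {R : Type*} [AddCommGroup R]

noncomputable def rangeCollapse : (G →₀ R) →+ (G →₀ R) := Finsupp.mapDomain.addMonoidHom 𝔾.r

lemma rangeCollapse_single (g : G) (c : R) :
    𝔾.rangeCollapse (Finsupp.single g c) = Finsupp.single (𝔾.r g) c :=
  Finsupp.mapDomain_single

lemma rangeCollapse_of_forall_unit {z : G →₀ R} (hz : ∀ g ∈ z.support, 𝔾.unit g) :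
    𝔾.rangeCollapse z = z :=
  (Finsupp.mapDomain_congr hz).trans Finsupp.mapDomain_id

lemma sum_single_sub_single_r (z : G →₀ R) :
    ∑ m ∈ z.support, (Finsupp.single m (z m) - Finsupp.single (𝔾.r m) (z m))
      = z - 𝔾.rangeCollapse z := by
  rw [Finset.sum_sub_distrib, ← Finsupp.eq_sum_support_single]
  rfl

end rangeCollapse

end DGroupoid

namespace PartialAction

variable {G R : Type*} [NonUnitalRing R] {𝔾 : DGroupoid G} (P : PartialAction 𝔾 R)

lemma act_zero (g : G) : P.act g 0 = 0 := by
  have h := P.act_add g 0 (P.zero_mem _) 0 (P.zero_mem _)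
  rwa [add_zero, left_eq_add] at h

lemma mem_D_inv_inv {g : G} {x : R} (hx : x ∈ P.D g) : x ∈ P.D (𝔾.inv (𝔾.inv g)) := by
  rwa [𝔾.inv_inv]

lemma act_inv_mem {g : G} {x : R} (hx : x ∈ P.D g) : P.act (𝔾.inv g) x ∈ P.D (𝔾.inv g) :=
  P.act_mem _ _ (P.mem_D_inv_inv hx)

lemma act_act_inv {g : G} {x : R} (hx : x ∈ P.D g) : P.act g (P.act (𝔾.inv g) x) = x := by
  simpa only [𝔾.inv_inv] using P.act_inv (𝔾.inv g) x (P.mem_D_inv_inv hx)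

lemma mem_D_r_inv {g h : G} (p : 𝔾.s g = 𝔾.r h) {b : R} (hb : b ∈ P.D h) :
    b ∈ P.D (𝔾.r (𝔾.inv g)) := by
  rw [𝔾.r_inv, p]
  exact P.subset_r h hb

lemma mul_mem_D_of_unit {e : G} (he : 𝔾.unit e) {x : R} (hx : x ∈ P.D e) (y : R) :
    x * y ∈ P.D e := by
  have h := P.idealR e
  rw [he] at h
  exact (h.2.2.2 x hx y).1

def skewCoeff (g : G) (a b : R) : R := P.act g (P.act (𝔾.inv g) a * b)

lemma skewCoeff_zero_left (g : G) (b : R) : P.skewCoeff g 0 b = 0 := by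
  rw [skewCoeff, P.act_zero, zero_mul, P.act_zero]

lemma skewCoeff_zero_right (g : G) (a : R) : P.skewCoeff g a 0 = 0 := by
  rw [skewCoeff, mul_zero, P.act_zero]

lemma skewCoeff_add_left {g : G} {a a' b : R} (ha : a ∈ P.D g) (ha' : a' ∈ P.D g)
    (hb : b ∈ P.D (𝔾.r (𝔾.inv g))) :
    P.skewCoeff g (a + a') b = P.skewCoeff g a b + P.skewCoeff g a' b := by
  rw [skewCoeff, P.act_add (𝔾.inv g) a (P.mem_D_inv_inv ha) a' (P.mem_D_inv_inv ha'), add_mul]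
  exact P.act_add g _ (P.idealInR _ _ (P.act_inv_mem ha) _ hb).1 _
    (P.idealInR _ _ (P.act_inv_mem ha') _ hb).1

lemma skewCoeff_add_right {g : G} {a b b' : R} (ha : a ∈ P.D g)
    (hb : b ∈ P.D (𝔾.r (𝔾.inv g))) (hb' : b' ∈ P.D (𝔾.r (𝔾.inv g))) :
    P.skewCoeff g a (b + b') = P.skewCoeff g a b + P.skewCoeff g a b' := by
  rw [skewCoeff, mul_add]
  exact P.act_add g _ (P.idealInR _ _ (P.act_inv_mem ha) _ hb).1 _
    (P.idealInR _ _ (P.act_inv_mem ha) _ hb').1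

lemma act_inv_mul_mem_D_inv {g h : G} (p : 𝔾.s g = 𝔾.r h) {a b : R} (ha : a ∈ P.D g)
    (hb : b ∈ P.D h) : P.act (𝔾.inv g) a * b ∈ P.D (𝔾.inv g) :=
  (P.idealInR _ _ (P.act_inv_mem ha) _ (P.mem_D_r_inv p hb)).1

lemma act_inv_mul_mem_D {g h : G} (p : 𝔾.s g = 𝔾.r h) {a b : R} (ha : a ∈ P.D g)
    (hb : b ∈ P.D h) : P.act (𝔾.inv g) a * b ∈ P.D h := by
  refine (P.idealInR h _ hb _ ?_).2
  have := P.subset_r _ (P.act_inv_mem ha)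
  rwa [𝔾.r_inv, p] at this

lemma act_inv_act_inv_mul_mem {g h : G} (p : 𝔾.s g = 𝔾.r h) {a b : R} (ha : a ∈ P.D g)
    (hb : b ∈ P.D h) :
    P.act (𝔾.inv h) (P.act (𝔾.inv g) a * b) ∈ P.D (𝔾.inv (𝔾.mul g h p)) :=
  P.act_comp_mem g h p _ (P.act_inv_mul_mem_D_inv p ha hb) (P.act_inv_mul_mem_D p ha hb)

lemma skewCoeff_eq_act_mul {g h : G} (p : 𝔾.s g = 𝔾.r h) {a b : R} (ha : a ∈ P.D g)
    (hb : b ∈ P.D h) :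
    P.skewCoeff g a b = P.act (𝔾.mul g h p) (P.act (𝔾.inv h) (P.act (𝔾.inv g) a * b)) := by
  have p' : 𝔾.s (𝔾.mul g h p) = 𝔾.r (𝔾.inv h) := by rw [𝔾.s_mul, 𝔾.r_inv]
  rw [P.act_comp _ _ p' _ (P.mem_D_inv_inv (P.act_inv_mul_mem_D p ha hb))
    (P.act_inv_act_inv_mul_mem p ha hb), 𝔾.mul_mul_inv g h p p', skewCoeff]

lemma skewCoeff_mem_D_mul {g h : G} (p : 𝔾.s g = 𝔾.r h) {a b : R} (ha : a ∈ P.D g)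
    (hb : b ∈ P.D h) : P.skewCoeff g a b ∈ P.D (𝔾.mul g h p) := by
  rw [P.skewCoeff_eq_act_mul p ha hb]
  exact P.act_mem _ _ (P.act_inv_act_inv_mul_mem p ha hb)

lemma skewCoeff_mem_D {g h : G} (p : 𝔾.s g = 𝔾.r h) {a b : R} (ha : a ∈ P.D g)
    (hb : b ∈ P.D h) : P.skewCoeff g a b ∈ P.D g :=
  P.act_mem _ _ (P.act_inv_mul_mem_D_inv p ha hb)

lemma skewCoeff_of_unit {e : G} (he : 𝔾.unit e) {a b : R} (ha : a ∈ P.D e) :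
    P.skewCoeff e a b = a * b := by
  rw [skewCoeff, 𝔾.inv_eq_self_of_unit he, P.act_unit e he a ha,
    P.act_unit e he _ (P.mul_mem_D_of_unit he ha b)]

lemma carrier_zero : (0 : G →₀ R) ∈ P.carrier := fun g => P.zero_mem g

lemma carrier_add {a b : G →₀ R} (ha : a ∈ P.carrier) (hb : b ∈ P.carrier) :
    a + b ∈ P.carrier := fun g => P.add_mem g _ (ha g) _ (hb g)

lemma carrier_neg {a : G →₀ R} (ha : a ∈ P.carrier) : -a ∈ P.carrier := fun g =>
  P.neg_mem g _ (ha g)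

lemma carrier_sub {a b : G →₀ R} (ha : a ∈ P.carrier) (hb : b ∈ P.carrier) :
    a - b ∈ P.carrier := by
  rw [sub_eq_add_neg]
  exact P.carrier_add ha (P.carrier_neg hb)

lemma carrier_single {g : G} {a : R} (ha : a ∈ P.D g) : Finsupp.single g a ∈ P.carrier := by
  intro g'
  rw [Finsupp.single_apply]
  split_ifs with h
  · exact h ▸ ha
  · exact P.zero_mem g'

lemma carrier_sum {ι : Type*} {A : Finset ι} {f : ι → G →₀ R}
    (hf : ∀ i ∈ A, f i ∈ P.carrier) : ∑ i ∈ A, f i ∈ P.carrier := by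
  induction A using Finset.induction_on with
  | empty => exact P.carrier_zero
  | insert i A hi ih =>
    rw [Finset.sum_insert hi]
    exact P.carrier_add (hf i (A.mem_insert_self i))
      (ih fun j hj => hf j (Finset.mem_insert_of_mem hj))

lemma skewMul_eq_sum {a b : G →₀ R} {X Y : Finset G} (hX : a.support ⊆ X)
    (hY : b.support ⊆ Y) :
    P.skewMul a b = ∑ g ∈ X, ∑ h ∈ Y,
      if p : 𝔾.s g = 𝔾.r h then Finsupp.single (𝔾.mul g h p) (P.skewCoeff g (a g) (b h))
      else 0 := by
  refine (Finset.sum_subset hX fun g _ hg => ?_).trans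
    (Finset.sum_congr rfl fun g _ => Finset.sum_subset hY fun h _ hh => ?_)
  · refine Finset.sum_eq_zero fun h _ => ?_
    simp [Finsupp.notMem_support_iff.mp hg, P.act_zero]
  · simp [Finsupp.notMem_support_iff.mp hh, P.act_zero]

lemma single_skewMul_single (g h : G) (a b : R) :
    P.skewMul (Finsupp.single g a) (Finsupp.single h b)
      = if p : 𝔾.s g = 𝔾.r h then Finsupp.single (𝔾.mul g h p) (P.skewCoeff g a b) else 0 := by
  rw [P.skewMul_eq_sum Finsupp.support_single_subset Finsupp.support_single_subset,
    Finset.sum_singleton, Finset.sum_singleton, Finsupp.single_eq_same, Finsupp.single_eq_same]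

lemma skewMul_zero_left (b : G →₀ R) : P.skewMul 0 b = 0 := rfl

lemma skewMul_zero_right (a : G →₀ R) : P.skewMul a 0 = 0 :=
  Finset.sum_eq_zero fun _ _ => rfl

lemma skewMul_mem_carrier {a b : G →₀ R} (ha : a ∈ P.carrier) (hb : b ∈ P.carrier) :
    P.skewMul a b ∈ P.carrier := by
  refine P.carrier_sum fun g _ => P.carrier_sum fun h _ => ?_
  split_ifs with p
  · exact P.carrier_single (P.skewCoeff_mem_D_mul p (ha g) (hb h))
  · exact P.carrier_zero

lemma skewMul_add_left {a a' b : G →₀ R} (ha : a ∈ P.carrier) (ha' : a' ∈ P.carrier)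
    (hb : b ∈ P.carrier) : P.skewMul (a + a') b = P.skewMul a b + P.skewMul a' b := by
  rw [P.skewMul_eq_sum Finsupp.support_add subset_rfl,
    P.skewMul_eq_sum Finset.subset_union_left subset_rfl,
    P.skewMul_eq_sum Finset.subset_union_right subset_rfl, ← Finset.sum_add_distrib]
  refine Finset.sum_congr rfl fun g _ => ?_
  rw [← Finset.sum_add_distrib]
  refine Finset.sum_congr rfl fun h _ => ?_
  split_ifs with p
  · rw [Finsupp.add_apply, P.skewCoeff_add_left (ha g) (ha' g) (P.mem_D_r_inv p (hb h)),
      Finsupp.single_add]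
  · rw [add_zero]

lemma skewMul_add_right {a b b' : G →₀ R} (ha : a ∈ P.carrier) (hb : b ∈ P.carrier)
    (hb' : b' ∈ P.carrier) : P.skewMul a (b + b') = P.skewMul a b + P.skewMul a b' := by
  rw [P.skewMul_eq_sum subset_rfl Finsupp.support_add,
    P.skewMul_eq_sum subset_rfl Finset.subset_union_left,
    P.skewMul_eq_sum subset_rfl Finset.subset_union_right, ← Finset.sum_add_distrib]
  refine Finset.sum_congr rfl fun g _ => ?_
  rw [← Finset.sum_add_distrib]
  refine Finset.sum_congr rfl fun h _ => ?_
  split_ifs with p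
  · rw [Finsupp.add_apply, P.skewCoeff_add_right (ha g) (P.mem_D_r_inv p (hb h))
      (P.mem_D_r_inv p (hb' h)), Finsupp.single_add]
  · rw [add_zero]

lemma skewMul_neg_left {a b : G →₀ R} (ha : a ∈ P.carrier) (hb : b ∈ P.carrier) :
    P.skewMul (-a) b = -P.skewMul a b := by
  have h := P.skewMul_add_left ha (P.carrier_neg ha) hb
  rw [add_neg_cancel, P.skewMul_zero_left] at h
  exact (neg_eq_of_add_eq_zero_right h.symm).symm

lemma skewMul_neg_right {a b : G →₀ R} (ha : a ∈ P.carrier) (hb : b ∈ P.carrier) :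
    P.skewMul a (-b) = -P.skewMul a b := by
  have h := P.skewMul_add_right ha hb (P.carrier_neg hb)
  rw [add_neg_cancel, P.skewMul_zero_right] at h
  exact (neg_eq_of_add_eq_zero_right h.symm).symm

lemma skewMul_sub_left {a a' b : G →₀ R} (ha : a ∈ P.carrier) (ha' : a' ∈ P.carrier)
    (hb : b ∈ P.carrier) : P.skewMul (a - a') b = P.skewMul a b - P.skewMul a' b := by
  rw [sub_eq_add_neg, P.skewMul_add_left ha (P.carrier_neg ha') hb,
    P.skewMul_neg_left ha' hb, sub_eq_add_neg]

lemma skewMul_sub_right {a b b' : G →₀ R} (ha : a ∈ P.carrier) (hb : b ∈ P.carrier)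
    (hb' : b' ∈ P.carrier) : P.skewMul a (b - b') = P.skewMul a b - P.skewMul a b' := by
  rw [sub_eq_add_neg, P.skewMul_add_right ha hb (P.carrier_neg hb'),
    P.skewMul_neg_right ha hb', sub_eq_add_neg]

lemma skewMul_sum_left {ι : Type*} {A : Finset ι} {f : ι → G →₀ R} {b : G →₀ R}
    (hf : ∀ i ∈ A, f i ∈ P.carrier) (hb : b ∈ P.carrier) :
    P.skewMul (∑ i ∈ A, f i) b = ∑ i ∈ A, P.skewMul (f i) b := by
  induction A using Finset.induction_on with
  | empty => exact P.skewMul_zero_left b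
  | insert i A hi ih =>
    have hA : ∀ j ∈ A, f j ∈ P.carrier := fun j hj => hf j (Finset.mem_insert_of_mem hj)
    rw [Finset.sum_insert hi, Finset.sum_insert hi,
      P.skewMul_add_left (hf i (A.mem_insert_self i)) (P.carrier_sum hA) hb, ih hA]

lemma skewMul_sum_right {ι : Type*} {A : Finset ι} {f : ι → G →₀ R} {a : G →₀ R}
    (ha : a ∈ P.carrier) (hf : ∀ i ∈ A, f i ∈ P.carrier) :
    P.skewMul a (∑ i ∈ A, f i) = ∑ i ∈ A, P.skewMul a (f i) := by
  induction A using Finset.induction_on with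
  | empty => exact P.skewMul_zero_right a
  | insert i A hi ih =>
    have hA : ∀ j ∈ A, f j ∈ P.carrier := fun j hj => hf j (Finset.mem_insert_of_mem hj)
    rw [Finset.sum_insert hi, Finset.sum_insert hi,
      P.skewMul_add_right ha (hf i (A.mem_insert_self i)) (P.carrier_sum hA), ih hA]

lemma skewMul_sum_single_left {a b : G →₀ R} (ha : a ∈ P.carrier) (hb : b ∈ P.carrier) :
    P.skewMul a b = ∑ g ∈ a.support, P.skewMul (Finsupp.single g (a g)) b := by
  conv_lhs => rw [Finsupp.eq_sum_support_single a]
  exact P.skewMul_sum_left (fun g _ => P.carrier_single (ha g)) hb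

lemma skewMul_sum_single_right {a b : G →₀ R} (ha : a ∈ P.carrier) (hb : b ∈ P.carrier) :
    P.skewMul a b = ∑ h ∈ b.support, P.skewMul a (Finsupp.single h (b h)) := by
  conv_lhs => rw [Finsupp.eq_sum_support_single b]
  exact P.skewMul_sum_right ha (fun h _ => P.carrier_single (hb h))

lemma exists_left_unit_pair {h : G} (hsu : IsSUnitalSet (P.D h)) {x y : R} (hx : x ∈ P.D h)
    (hy : y ∈ P.D h) : ∃ v ∈ P.D h, v * x = x ∧ v * y = y := by
  obtain ⟨a, ha, hax⟩ := (hsu x hx).2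
  have hay : a * y ∈ P.D h := (P.idealInR h _ ha _ (P.subset_r h hy)).1
  have hy' : y - a * y ∈ P.D h := by
    rw [sub_eq_add_neg]
    exact P.add_mem h _ hy _ (P.neg_mem h _ hay)
  obtain ⟨b, hb, hby⟩ := (hsu _ hy').2
  refine ⟨a + b - b * a, ?_, ?_, ?_⟩
  · rw [sub_eq_add_neg]
    exact P.add_mem h _ (P.add_mem h _ ha _ hb) _
      (P.neg_mem h _ (P.idealInR h _ hb _ (P.subset_r h ha)).1)
  · have e : (a + b - b * a) * x = a * x + (b * x - b * (a * x)) := by noncomm_ring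
    rw [e, hax, sub_self, add_zero]
  · have e : (a + b - b * a) * y = a * y + b * (y - a * y) := by noncomm_ring
    rw [e, hby, add_sub_cancel]

lemma skewCoeff_assoc {g h k : G} (hsu : IsSUnitalSet (P.D h)) (p : 𝔾.s g = 𝔾.r h)
    (q : 𝔾.s h = 𝔾.r k) {a b c : R} (ha : a ∈ P.D g) (hb : b ∈ P.D h) (hc : c ∈ P.D k) :
    P.skewCoeff (𝔾.mul g h p) (P.skewCoeff g a b) c = P.skewCoeff g a (P.skewCoeff h b c) := by
  set A := P.act (𝔾.inv g) a
  have hA : A ∈ P.D (𝔾.r h) := by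
    have := P.subset_r _ (P.act_inv_mem ha)
    rwa [𝔾.r_inv, p] at this
  have hW : P.skewCoeff h b c ∈ P.D h := P.skewCoeff_mem_D q hb hc
  -- a common local left unit `v` of `b` and `bc` lets `α_{h⁻¹}` split the product `A b`
  obtain ⟨v, hv, hvb, hvW⟩ := P.exists_left_unit_pair hsu hb hW
  have hAv : A * v ∈ P.D h := (P.idealInR h _ hv _ hA).2
  have hAv' : A * v ∈ P.D (𝔾.inv g) :=
    (P.idealInR _ _ (P.act_inv_mem ha) _ (P.mem_D_r_inv p hv)).1
  set Y := P.act (𝔾.inv h) (A * v)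
  have hBc : P.act (𝔾.inv h) b * c ∈ P.D (𝔾.inv h) := P.act_inv_mul_mem_D_inv q hb hc
  have hYBc : Y * (P.act (𝔾.inv h) b * c) ∈ P.D (𝔾.inv h) :=
    (P.idealInR _ _ (P.act_inv_mem hAv) _ (P.subset_r _ hBc)).1
  have hAb : A * b = A * v * b := by rw [mul_assoc, hvb]
  have lhs : P.skewCoeff (𝔾.mul g h p) (P.skewCoeff g a b) c
      = P.act (𝔾.mul g h p) (Y * (P.act (𝔾.inv h) b * c)) := by
    rw [skewCoeff, P.skewCoeff_eq_act_mul p ha hb,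
      P.act_inv _ _ (P.act_inv_act_inv_mul_mem p ha hb), hAb,
      P.act_mul (𝔾.inv h) _ (P.mem_D_inv_inv hAv) _ (P.mem_D_inv_inv hb), mul_assoc]
  have hZ : P.act h (Y * (P.act (𝔾.inv h) b * c)) = A * v * P.skewCoeff h b c := by
    rw [P.act_mul h _ (P.act_inv_mem hAv) _ hBc, P.act_act_inv hAv]
    rfl
  have hAvW : A * v * P.skewCoeff h b c ∈ P.D (𝔾.inv g) :=
    (P.idealInR _ _ hAv' _ (P.mem_D_r_inv p hW)).1
  rw [lhs, ← P.act_comp g h p _ hYBc (hZ ▸ hAvW), hZ, mul_assoc, hvW]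
  rfl

lemma single_skewMul_single_assoc (hsu : ∀ g, IsSUnitalSet (P.D g)) (g h k : G) {a b c : R}
    (ha : a ∈ P.D g) (hb : b ∈ P.D h) (hc : c ∈ P.D k) :
    P.skewMul (P.skewMul (Finsupp.single g a) (Finsupp.single h b)) (Finsupp.single k c)
      = P.skewMul (Finsupp.single g a)
          (P.skewMul (Finsupp.single h b) (Finsupp.single k c)) := by
  rw [P.single_skewMul_single g h, P.single_skewMul_single h k]
  by_cases p : 𝔾.s g = 𝔾.r h <;> by_cases q : 𝔾.s h = 𝔾.r k
  · have pq : 𝔾.s (𝔾.mul g h p) = 𝔾.r k := by rw [𝔾.s_mul]; exact q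
    have qp : 𝔾.s g = 𝔾.r (𝔾.mul h k q) := by rw [𝔾.r_mul]; exact p
    rw [dif_pos p, dif_pos q, P.single_skewMul_single, P.single_skewMul_single, dif_pos pq,
      dif_pos qp, 𝔾.assoc g h k p q pq qp, P.skewCoeff_assoc (hsu h) p q ha hb hc]
  · have hpq : ¬ 𝔾.s (𝔾.mul g h p) = 𝔾.r k := by rw [𝔾.s_mul]; exact q
    rw [dif_pos p, dif_neg q, P.skewMul_zero_right, P.single_skewMul_single, dif_neg hpq]
  · have hqp : ¬ 𝔾.s g = 𝔾.r (𝔾.mul h k q) := by rw [𝔾.r_mul]; exact p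
    rw [dif_neg p, dif_pos q, P.skewMul_zero_left, P.single_skewMul_single, dif_neg hqp]
  · rw [dif_neg p, dif_neg q, P.skewMul_zero_left, P.skewMul_zero_right]

theorem skewMul_assoc (hsu : ∀ g, IsSUnitalSet (P.D g)) {a b c : G →₀ R}
    (ha : a ∈ P.carrier) (hb : b ∈ P.carrier) (hc : c ∈ P.carrier) :
    P.skewMul (P.skewMul a b) c = P.skewMul a (P.skewMul b c) := by
  have singles : ∀ g h, ∀ x ∈ P.D g, ∀ y ∈ P.D h,
      P.skewMul (P.skewMul (Finsupp.single g x) (Finsupp.single h y)) c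
        = P.skewMul (Finsupp.single g x) (P.skewMul (Finsupp.single h y) c) := by
    intro g h x hx y hy
    have hxy := P.skewMul_mem_carrier (P.carrier_single hx) (P.carrier_single hy)
    rw [P.skewMul_sum_single_right hxy hc, P.skewMul_sum_single_right (P.carrier_single hy) hc,
      P.skewMul_sum_right (P.carrier_single hx) fun k _ =>
        P.skewMul_mem_carrier (P.carrier_single hy) (P.carrier_single (hc k))]
    exact Finset.sum_congr rfl fun k _ => P.single_skewMul_single_assoc hsu g h k hx hy (hc k)
  have single_left : ∀ g, ∀ x ∈ P.D g,
      P.skewMul (P.skewMul (Finsupp.single g x) b) c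
        = P.skewMul (Finsupp.single g x) (P.skewMul b c) := by
    intro g x hx
    rw [P.skewMul_sum_single_right (P.carrier_single hx) hb,
      P.skewMul_sum_left (fun h _ =>
        P.skewMul_mem_carrier (P.carrier_single hx) (P.carrier_single (hb h))) hc,
      P.skewMul_sum_single_left hb hc, P.skewMul_sum_right (P.carrier_single hx) fun h _ =>
        P.skewMul_mem_carrier (P.carrier_single (hb h)) hc]
    exact Finset.sum_congr rfl fun h _ => singles g h x hx (b h) (hb h)
  rw [P.skewMul_sum_single_left ha hb,
    P.skewMul_sum_left (fun g _ => P.skewMul_mem_carrier (P.carrier_single (ha g)) hb) hc,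
    P.skewMul_sum_single_left ha (P.skewMul_mem_carrier hb hc)]
  exact Finset.sum_congr rfl fun g _ => single_left g (a g) (ha g)

lemma IsSkewIdeal.skewMul_mem_right {P : PartialAction 𝔾 R} {I : Set (G →₀ R)}
    (hI : P.IsSkewIdeal I) {x y : G →₀ R} (hx : x ∈ I) (hy : y ∈ P.carrier) :
    P.skewMul x y ∈ I :=
  (hI.2.2.2.2 x hx y hy).1

lemma IsSkewIdeal.skewMul_mem_left {P : PartialAction 𝔾 R} {I : Set (G →₀ R)}
    (hI : P.IsSkewIdeal I) {x y : G →₀ R} (hx : x ∈ I) (hy : y ∈ P.carrier) :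
    P.skewMul y x ∈ I :=
  (hI.2.2.2.2 x hx y hy).2

lemma IsSkewIdeal.sub_mem {P : PartialAction 𝔾 R} {I : Set (G →₀ R)}
    (hI : P.IsSkewIdeal I) {x y : G →₀ R} (hx : x ∈ I) (hy : y ∈ I) : x - y ∈ I := by
  rw [sub_eq_add_neg]
  exact hI.2.2.1 x hx _ (hI.2.2.2.1 y hy)

lemma single_mem_diag {e : G} (he : 𝔾.unit e) {u : R} (hu : u ∈ P.D e) :
    Finsupp.single e u ∈ P.diag := by
  refine ⟨P.carrier_single hu, fun g hg => ?_⟩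
  rwa [Finset.mem_singleton.mp (Finsupp.support_single_subset hg)]

lemma diag_skewMul_apply {d w : G →₀ R} (hd : d ∈ P.diag) (g : G) :
    P.skewMul d w g = d (𝔾.r g) * w g := by
  rw [P.skewMul_eq_sum (subset_rfl) (subset_rfl), Finsupp.finsetSum_apply]
  simp_rw [Finsupp.finsetSum_apply]
  rw [Finset.sum_eq_single (𝔾.r g), Finset.sum_eq_single g]
  · rw [dif_pos (𝔾.s_of_r g), 𝔾.id_mul, Finsupp.single_eq_same,
      P.skewCoeff_of_unit (𝔾.unit_r g) (hd.1 _)]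
  · intro h _ hne
    split_ifs with p
    · exact Finsupp.single_eq_of_ne' (by rwa [𝔾.mul_of_unit_left (𝔾.unit_r g) p])
    · rfl
  · intro hg
    simp [Finsupp.notMem_support_iff.mp hg, P.skewCoeff_zero_right]
  · intro f hf hne
    refine Finset.sum_eq_zero fun h _ => ?_
    split_ifs with p
    · refine Finsupp.single_eq_of_ne' fun hfg => hne ?_
      rw [𝔾.mul_of_unit_left (hd.2 f hf) p] at hfg
      rw [← 𝔾.s_eq_self_of_unit (hd.2 f hf), p, hfg]
    · rfl
  · intro hg
    simp [Finsupp.notMem_support_iff.mp hg, P.skewCoeff_zero_left]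

lemma skewMul_diag_apply {w d : G →₀ R} (hd : d ∈ P.diag) (g : G) :
    P.skewMul w d g = P.skewCoeff g (w g) (d (𝔾.s g)) := by
  rw [P.skewMul_eq_sum (subset_rfl) (subset_rfl), Finsupp.finsetSum_apply]
  simp_rw [Finsupp.finsetSum_apply]
  have p : 𝔾.s g = 𝔾.r (𝔾.s g) := (𝔾.r_of_s g).symm
  rw [Finset.sum_eq_single g, Finset.sum_eq_single (𝔾.s g)]
  · rw [dif_pos p, 𝔾.mul_id, Finsupp.single_eq_same]
  · intro h hh hne
    rw [dif_neg fun p' => hne (by rw [p', hd.2 h hh]), Finsupp.zero_apply]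
  · intro hs
    simp [Finsupp.notMem_support_iff.mp hs, P.skewCoeff_zero_right]
  · intro f _ hne
    refine Finset.sum_eq_zero fun h hh => ?_
    split_ifs with p'
    · exact Finsupp.single_eq_of_ne' (by rwa [𝔾.mul_of_unit_right (hd.2 h hh) p'])
    · rfl
  · intro hg
    simp [Finsupp.notMem_support_iff.mp hg, P.skewCoeff_zero_left]

lemma card_support_skewMul_single_le (z : G →₀ R) (k : G) (v : R) :
    (P.skewMul z (Finsupp.single k v)).support.card ≤ z.support.card := by
  rw [P.skewMul_eq_sum subset_rfl Finsupp.support_single_subset]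
  refine (Finset.card_le_card Finsupp.support_finsetSum).trans
    (Finset.card_biUnion_le.trans ?_)
  refine (Finset.sum_le_sum fun h _ => ?_).trans (Finset.card_eq_sum_ones _).ge
  rw [Finset.sum_singleton]
  split_ifs
  · exact (Finset.card_le_card Finsupp.support_single_subset).trans (Finset.card_singleton _).le
  · simp

lemma skewMul_single_inv_apply_r (z : G →₀ R) (g : G) (v : R) :
    P.skewMul z (Finsupp.single (𝔾.inv g) v) (𝔾.r g) = P.skewCoeff g (z g) v := by
  rw [P.skewMul_eq_sum (Finset.subset_insert g _) Finsupp.support_single_subset,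
    Finsupp.finsetSum_apply, Finset.sum_eq_single_of_mem g (Finset.mem_insert_self g _)]
  · have p : 𝔾.s g = 𝔾.r (𝔾.inv g) := (𝔾.r_inv g).symm
    rw [Finset.sum_singleton, dif_pos p, 𝔾.mul_inv, Finsupp.single_eq_same,
      Finsupp.single_eq_same]
  · intro h _ hne
    rw [Finset.sum_singleton]
    split_ifs with p
    · exact Finsupp.single_eq_of_ne' fun hh => hne (𝔾.eq_of_mul_inv_eq_r p hh)
    · rfl

lemma exists_mem_apply_r_ne_zero {g : G} (hsu : IsSUnitalSet (P.D (𝔾.inv g)))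
    {I : Set (G →₀ R)} (hI : P.IsSkewIdeal I) {z : G →₀ R} (hz : z ∈ I) (hg : g ∈ z.support) :
    ∃ w ∈ I, w.support.card ≤ z.support.card ∧ w (𝔾.r g) ≠ 0 := by
  obtain ⟨v, hv, hzv⟩ := (hsu _ (P.act_inv_mem (hI.1 hz g))).1
  refine ⟨_, hI.skewMul_mem_right hz (P.carrier_single hv),
    P.card_support_skewMul_single_le z _ v, ?_⟩
  rw [P.skewMul_single_inv_apply_r, skewCoeff, hzv, P.act_act_inv (hI.1 hz g)]
  exact Finsupp.mem_support_iff.mp hg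

lemma commute_diag_apply {b : G →₀ R} (hcomm : ∀ a ∈ P.diag, P.skewMul a b = P.skewMul b a)
    {g : G} {u : R} (hu : u ∈ P.D (𝔾.r g)) :
    u * b g = P.skewCoeff g (b g) (Finsupp.single (𝔾.r g) u (𝔾.s g)) := by
  have h := DFunLike.congr_fun (hcomm _ (P.single_mem_diag (𝔾.unit_r g) hu)) g
  rwa [P.diag_skewMul_apply (P.single_mem_diag (𝔾.unit_r g) hu),
    P.skewMul_diag_apply (P.single_mem_diag (𝔾.unit_r g) hu), Finsupp.single_eq_same] at h

lemma s_eq_r_of_commute_diag {g : G} (hsu : IsSUnitalSet (P.D g)) {b : G →₀ R}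
    (hb : b ∈ P.carrier) (hcomm : ∀ a ∈ P.diag, P.skewMul a b = P.skewMul b a)
    (hg : b g ≠ 0) : 𝔾.s g = 𝔾.r g := by
  by_contra hne
  obtain ⟨v, hv, hvb⟩ := (hsu _ (hb g)).2
  have h := P.commute_diag_apply hcomm (P.subset_r g hv)
  rw [Finsupp.single_eq_of_ne' (Ne.symm hne), P.skewCoeff_zero_right, hvb] at h
  exact hg h

lemma rangeCollapse_single_skewMul_single_sub {h m : G} {a c : R} (ha : a ∈ P.D h)
    (hc : c ∈ P.D m) :
    𝔾.rangeCollapse (P.skewMul (Finsupp.single h a)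
      (Finsupp.single m c - Finsupp.single (𝔾.r m) c)) = 0 := by
  rw [P.skewMul_sub_right (P.carrier_single ha) (P.carrier_single hc)
    (P.carrier_single (P.subset_r m hc)), P.single_skewMul_single, P.single_skewMul_single]
  by_cases p : 𝔾.s h = 𝔾.r m
  · rw [dif_pos p, dif_pos (p.trans (𝔾.r_idem m).symm), 𝔾.mul_of_unit_right (𝔾.unit_r m),
      map_sub, 𝔾.rangeCollapse_single, 𝔾.rangeCollapse_single, 𝔾.r_mul, sub_self]
  · rw [dif_neg p, dif_neg fun p' => p (p'.trans (𝔾.r_idem m)), sub_zero, map_zero]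

-- Kernel elements are sums of `c δ_m - c δ_{r m}`, which left multiplication by `a δ_h`
-- sends to `c' δ_{hm} - c' δ_h`.
lemma rangeCollapse_skewMul_eq_zero {s z : G →₀ R} (hs : s ∈ P.carrier) (hz : z ∈ P.carrier)
    (h0 : 𝔾.rangeCollapse z = 0) : 𝔾.rangeCollapse (P.skewMul s z) = 0 := by
  have hpair : ∀ m, Finsupp.single m (z m) - Finsupp.single (𝔾.r m) (z m) ∈ P.carrier :=
    fun m => P.carrier_sub (P.carrier_single (hz m)) (P.carrier_single (P.subset_r m (hz m)))
  have hz' : z = ∑ m ∈ z.support, (Finsupp.single m (z m) - Finsupp.single (𝔾.r m) (z m)) := by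
    rw [𝔾.sum_single_sub_single_r, h0, sub_zero]
  rw [hz', P.skewMul_sum_right hs fun m _ => hpair m, map_sum]
  refine Finset.sum_eq_zero fun m _ => ?_
  rw [P.skewMul_sum_single_left hs (hpair m), map_sum]
  exact Finset.sum_eq_zero fun h _ => P.rangeCollapse_single_skewMul_single_sub (hs h) (hz m)

lemma isSkewIdeal_setOf_skewMul_mem (hsu : ∀ g, IsSUnitalSet (P.D g)) {K : AddSubgroup (G →₀ R)}
    (hK : ∀ s ∈ P.carrier, ∀ z ∈ P.carrier, z ∈ K → P.skewMul s z ∈ K) :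
    P.IsSkewIdeal {z | z ∈ P.carrier ∧ z ∈ K ∧ ∀ t ∈ P.carrier, P.skewMul z t ∈ K} := by
  refine ⟨fun z hz => hz.1, ⟨P.carrier_zero, K.zero_mem, fun t _ => K.zero_mem⟩,
    fun x hx y hy => ⟨P.carrier_add hx.1 hy.1, K.add_mem hx.2.1 hy.2.1, fun t ht => ?_⟩,
    fun x hx => ⟨P.carrier_neg hx.1, K.neg_mem hx.2.1, fun t ht => ?_⟩,
    fun x hx y hy => ⟨⟨P.skewMul_mem_carrier hx.1 hy, hx.2.2 y hy, fun t ht => ?_⟩,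
      ⟨P.skewMul_mem_carrier hy hx.1, hK y hy x hx.1 hx.2.1, fun t ht => ?_⟩⟩⟩
  · rw [P.skewMul_add_left hx.1 hy.1 ht]
    exact K.add_mem (hx.2.2 t ht) (hy.2.2 t ht)
  · rw [P.skewMul_neg_left hx.1 ht]
    exact K.neg_mem (hx.2.2 t ht)
  · rw [P.skewMul_assoc hsu hx.1 hy ht]
    exact hx.2.2 _ (P.skewMul_mem_carrier hy ht)
  · rw [P.skewMul_assoc hsu hy hx.1 ht]
    exact hK y hy _ (P.skewMul_mem_carrier hx.1 ht) (hx.2.2 t ht)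

end PartialAction

namespace PartialAction

variable {G R : Type*} [NonUnitalCommRing R] {𝔾 : DGroupoid G} (P : PartialAction 𝔾 R)

lemma support_commutator_subset {d w : G →₀ R} (hd : d ∈ P.diag) (hw : w ∈ P.carrier) :
    (P.skewMul d w - P.skewMul w d).support ⊆ w.support.filter fun g => ¬ 𝔾.unit g := by
  intro g hg
  rw [Finsupp.mem_support_iff, Finsupp.sub_apply, P.diag_skewMul_apply hd,
    P.skewMul_diag_apply hd] at hg
  rw [Finset.mem_filter, Finsupp.mem_support_iff]
  refine ⟨fun hwg => hg ?_, fun hu => hg ?_⟩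
  · rw [hwg, mul_zero, P.skewCoeff_zero_left, sub_zero]
  · rw [show 𝔾.r g = g from hu, 𝔾.s_eq_self_of_unit hu, P.skewCoeff_of_unit hu (hw g), mul_comm,
      sub_self]

lemma exists_ne_zero_mem_inter_diag (hsu : ∀ g, IsSUnitalSet (P.D g)) (hmc : P.IsMaxCommDiag)
    {I : Set (G →₀ R)} (hI : P.IsSkewIdeal I) (n : ℕ) :
    ∀ w ∈ I, w.support.card = n → ∀ e, 𝔾.unit e → w e ≠ 0 → ∃ z ∈ I ∩ P.diag, z ≠ 0 := by
  induction n using Nat.strong_induction_on with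
  | _ n ih =>
  intro w hw hn e he hwe
  by_cases hcent : ∀ d ∈ P.diag, P.skewMul d w = P.skewMul w d
  · exact ⟨w, ⟨hw, hmc.2 w (hI.1 hw) hcent⟩, fun h => hwe (by rw [h, Finsupp.zero_apply])⟩
  push Not at hcent
  obtain ⟨d, hd, hne⟩ := hcent
  have hy : P.skewMul d w - P.skewMul w d ∈ I :=
    hI.sub_mem (hI.skewMul_mem_left hw hd.1) (hI.skewMul_mem_right hw hd.1)
  obtain ⟨g, hg⟩ := Finsupp.support_nonempty_iff.mpr (sub_ne_zero.mpr hne)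
  obtain ⟨w', hw', hcard, hw'g⟩ := P.exists_mem_apply_r_ne_zero (hsu _) hI hy hg
  have hlt : (w.support.filter fun g => ¬ 𝔾.unit g).card < n :=
    hn ▸ Finset.card_lt_card (Finset.filter_ssubset.mpr
      ⟨e, Finsupp.mem_support_iff.mpr hwe, not_not.mpr he⟩)
  have hsub := Finset.card_le_card (P.support_commutator_subset hd (hI.1 hw))
  exact ih _ ((hcard.trans hsub).trans_lt hlt) w' hw' rfl _ (𝔾.unit_r g) hw'g

theorem hasIntersectionProperty_of_isMaxCommDiag (hsu : ∀ g, IsSUnitalSet (P.D g))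
    (hmc : P.IsMaxCommDiag) : P.HasIntersectionProperty := by
  intro I hI hne hcap
  obtain ⟨z, hz, hz0⟩ : ∃ z ∈ I, z ≠ 0 := by
    by_contra! h
    exact hne (Set.eq_singleton_iff_unique_mem.mpr ⟨hI.2.1, h⟩)
  obtain ⟨g, hg⟩ := Finsupp.support_nonempty_iff.mpr hz0
  obtain ⟨w, hw, -, hwg⟩ := P.exists_mem_apply_r_ne_zero (hsu _) hI hz hg
  obtain ⟨y, hy, hy0⟩ :=
    P.exists_ne_zero_mem_inter_diag hsu hmc hI _ w hw rfl _ (𝔾.unit_r g) hwg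
  rw [hcap] at hy
  exact hy0 hy

lemma diag_skewMul_comm {a b : G →₀ R} (ha : a ∈ P.diag) (hb : b ∈ P.diag) :
    P.skewMul a b = P.skewMul b a := by
  ext g
  rw [P.diag_skewMul_apply ha, P.diag_skewMul_apply hb]
  by_cases hu : 𝔾.unit g
  · rw [show 𝔾.r g = g from hu, mul_comm]
  · rw [Finsupp.notMem_support_iff.mp fun h => hu (ha.2 g h),
      Finsupp.notMem_support_iff.mp fun h => hu (hb.2 g h), mul_zero, mul_zero]

lemma rangeCollapse_single_sub_single_skewMul {g : G} (hs : 𝔾.s g = 𝔾.r g) {c : R}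
    (hc : c ∈ P.D g) (hstar : ∀ u ∈ P.D (𝔾.r g), P.skewCoeff g c u = u * c)
    {t : G →₀ R} (ht : t ∈ P.carrier) :
    𝔾.rangeCollapse (P.skewMul (Finsupp.single (𝔾.r g) c - Finsupp.single g c) t) = 0 := by
  have hx := P.carrier_sub (P.carrier_single (P.subset_r g hc)) (P.carrier_single hc)
  rw [P.skewMul_sum_single_right hx ht, map_sum]
  refine Finset.sum_eq_zero fun k _ => ?_
  rw [P.skewMul_sub_left (P.carrier_single (P.subset_r g hc)) (P.carrier_single hc)
    (P.carrier_single (ht k)), P.single_skewMul_single, P.single_skewMul_single]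
  have hsr : 𝔾.s (𝔾.r g) = 𝔾.s g := (𝔾.s_of_r g).trans hs.symm
  by_cases p : 𝔾.s g = 𝔾.r k
  · rw [dif_pos (hsr.trans p), dif_pos p, 𝔾.mul_of_unit_left (𝔾.unit_r g)]
    have htk : t k ∈ P.D (𝔾.r g) := by
      rw [← hs, p]
      exact P.subset_r k (ht k)
    rw [map_sub, 𝔾.rangeCollapse_single, 𝔾.rangeCollapse_single, 𝔾.r_mul, ← p, hs,
      P.skewCoeff_of_unit (𝔾.unit_r g) (P.subset_r g hc), hstar _ htk, mul_comm, sub_self]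
  · rw [dif_neg (hsr ▸ p), dif_neg p, sub_zero, map_zero]

lemma exists_isSkewIdeal_inter_diag_eq_zero (hsu : ∀ g, IsSUnitalSet (P.D g)) {b : G →₀ R}
    (hb : b ∈ P.carrier) (hcomm : ∀ a ∈ P.diag, P.skewMul a b = P.skewMul b a) {g : G}
    (hg : b g ≠ 0) (hgu : ¬ 𝔾.unit g) :
    ∃ I, P.IsSkewIdeal I ∧ I ≠ {0} ∧ I ∩ P.diag = {0} := by
  have hs := P.s_eq_r_of_commute_diag (hsu g) hb hcomm hg
  have hstar : ∀ u ∈ P.D (𝔾.r g), P.skewCoeff g (b g) u = u * b g := fun u hu => by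
    rw [P.commute_diag_apply hcomm hu, hs, Finsupp.single_eq_same]
  set x := Finsupp.single (𝔾.r g) (b g) - Finsupp.single g (b g)
  have hx : x ∈ P.carrier :=
    P.carrier_sub (P.carrier_single (P.subset_r g (hb g))) (P.carrier_single (hb g))
  have hx0 : x ≠ 0 := fun h => hg <| by
    simpa [x, Finsupp.single_eq_of_ne' hgu] using DFunLike.congr_fun h g
  have hxI : x ∈ {z | z ∈ P.carrier ∧ z ∈ 𝔾.rangeCollapse.ker ∧
      ∀ t ∈ P.carrier, P.skewMul z t ∈ 𝔾.rangeCollapse.ker} :=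
    ⟨hx, by simp [x, 𝔾.rangeCollapse_single, 𝔾.r_idem],
      fun t ht => P.rangeCollapse_single_sub_single_skewMul hs (hb g) hstar ht⟩
  refine ⟨_, P.isSkewIdeal_setOf_skewMul_mem hsu (K := 𝔾.rangeCollapse.ker)
      fun s hs z hz h0 => P.rangeCollapse_skewMul_eq_zero hs hz h0,
    fun h => hx0 (by rw [h] at hxI; exact hxI), Set.eq_singleton_iff_unique_mem.mpr ⟨?_, ?_⟩⟩
  · exact ⟨⟨P.carrier_zero, map_zero _, fun t _ => map_zero _⟩, P.carrier_zero, by simp⟩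
  · rintro z ⟨hzI, hzd⟩
    exact (𝔾.rangeCollapse_of_forall_unit hzd.2).symm.trans hzI.2.1

theorem isMaxCommDiag_of_hasIntersectionProperty (hsu : ∀ g, IsSUnitalSet (P.D g))
    (hip : P.HasIntersectionProperty) : P.IsMaxCommDiag := by
  refine ⟨fun a ha b hb => P.diag_skewMul_comm ha hb, fun b hb hcomm => ⟨hb, fun g hg => ?_⟩⟩
  by_contra hgu
  obtain ⟨I, hI, hne, hcap⟩ :=
    P.exists_isSkewIdeal_inter_diag_eq_zero hsu hb hcomm (Finsupp.mem_support_iff.mp hg) hgu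
  exact hip I hI hne hcap

end PartialAction

theorem maxCommDiag_iff_intersectionProperty_general {G R : Type*} [NonUnitalCommRing R]
    (𝔾 : DGroupoid G) (P : PartialAction 𝔾 R)
    (hsu : ∀ g, IsSUnitalSet (P.D g)) :
    P.IsMaxCommDiag ↔ P.HasIntersectionProperty :=
  ⟨P.hasIntersectionProperty_of_isMaxCommDiag hsu, P.isMaxCommDiag_of_hasIntersectionProperty hsu⟩

/-- **Statement 9.** Suppose `R` is commutative.  Then `⊕_{e ∈ G₀} D_e δ_e` is a
maximal commutative subring of `R ⋊_α G` if, and only if, `α` has the intersection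
property. -/
theorem maxCommDiag_iff_intersectionProperty {G R : Type*} [NonUnitalCommRing R]
    (𝔾 : DGroupoid G) (P : PartialAction 𝔾 R)
    (hsu : ∀ g, IsSUnitalSet (P.D g)) (hds : P.directSum) :
    P.IsMaxCommDiag ↔ P.HasIntersectionProperty :=
  maxCommDiag_iff_intersectionProperty_general 𝔾 P hsu
end

section
/- Let 𝒢 be an ultragraph. Then every loop in 𝒢 is recurrent if, and only if, 𝒢 satisfies Condition (K). -/
/-- An ultragraph `𝒢 = (G⁰, 𝒢¹, r, s)`: countable sets of vertices and edges, a source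
map `src : 𝒢¹ → G⁰` and a range map `rng : 𝒢¹ → 𝒫(G⁰) \ {∅}`. -/
structure Ultragraph where
  V : Type
  E : Type
  countV : Countable V
  countE : Countable E
  src : E → V
  rng : E → Set V
  rng_nonempty : ∀ e, (rng e).Nonempty

namespace Ultragraph

variable (U : Ultragraph)

/-- Consecutive edges of the list are composable: `s(α_{i+1}) ∈ r(α_i)`. -/
def Chain (l : List U.E) : Prop :=
  ∀ i : ℕ, ∀ h : i + 1 < l.length,
    U.src (l.get ⟨i + 1, h⟩) ∈ U.rng (l.get ⟨i, Nat.lt_of_succ_lt h⟩)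

/-- A (finite) path of length `≥ 1` in the ultragraph. -/
def IsPath (l : List U.E) : Prop := l ≠ [] ∧ U.Chain l

/-- A loop: a path `α` with `s(α) ∈ r(α_n)`. -/
def IsLoop (l : List U.E) : Prop :=
  U.IsPath l ∧ ∃ h : l ≠ [], U.src (l.head h) ∈ U.rng (l.getLast h)

/-- A loop based at the vertex `v`. -/
def IsLoopBasedAt (l : List U.E) (v : U.V) : Prop :=
  U.IsLoop l ∧ ∃ h : l ≠ [], U.src (l.head h) = v

/-- A simple loop based at `v`: `s(α_i) ≠ s(α_1) = v` for all `i ≠ 1`. -/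
def IsSimpleLoopBasedAt (l : List U.E) (v : U.V) : Prop :=
  U.IsLoopBasedAt l v ∧ ∀ i : ℕ, ∀ h : i < l.length, i ≠ 0 → U.src (l.get ⟨i, h⟩) ≠ v

/-- The periodic infinite path `γ^∞ = γγγ⋯`, as an infinite sequence of edges. -/
def perInf (l : List U.E) (h : l ≠ []) : ℕ → U.E :=
  fun n => l.get ⟨n % l.length, Nat.mod_lt _ (List.length_pos_iff.mpr h)⟩

/-- Prefix a finite word to an infinite word of edges. -/
def appendInf (l : List U.E) (f : ℕ → U.E) : ℕ → U.E :=
  fun n => if h : n < l.length then l.get ⟨n, h⟩ else f (n - l.length)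

/-- A loop `γ` is recurrent: there is a loop `ρ` with `s(ρ) = s(γ)` and
`γργ^∞ ≠ γ^∞` (as infinite sequences of edges). -/
def IsRecurrent (γ : List U.E) : Prop :=
  U.IsLoop γ ∧ ∃ ρ : List U.E, U.IsLoop ρ ∧ ∃ (hγ : γ ≠ []) (hρ : ρ ≠ []),
    U.src (ρ.head hρ) = U.src (γ.head hγ) ∧
    U.appendInf (γ ++ ρ) (U.perInf γ hγ) ≠ U.perInf γ hγ

/-- Condition (K): every vertex has either no simple loop based at it, or at least two
distinct simple loops based at it. -/
def ConditionK : Prop :=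
  ∀ v : U.V, (∀ l : List U.E, ¬ U.IsSimpleLoopBasedAt l v) ∨
    ∃ l₁ l₂ : List U.E, U.IsSimpleLoopBasedAt l₁ v ∧ U.IsSimpleLoopBasedAt l₂ v ∧ l₁ ≠ l₂

end Ultragraph

/-!
A loop based at `v` is a concatenation of simple loops based at `v`: cut it at its returns
to `v`. So if `γ` is the only simple loop based at `v`, every loop `ρ` based at `v` is a power
of `γ`, whence `γργ^∞ = γ^∞` and `γ` is transitory. Conversely, `γργ^∞ = γ^∞` amounts to
`ργ^∞ = γ^∞`, and a simple loop `ρ` based at `s(γ)` with this property must be the prefix of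
`γ^∞` up to its first return to `s(γ)`; hence of two distinct simple loops based at `s(γ)`
at least one witnesses that `γ` is recurrent.
-/

namespace Ultragraph

variable {U : Ultragraph}

theorem chain_iff_isChain {l : List U.E} :
    U.Chain l ↔ l.IsChain (fun a b => U.src b ∈ U.rng a) := by
  simp [Chain, List.isChain_iff_getElem]

theorem isLoopBasedAt_iff {l : List U.E} {v : U.V} :
    U.IsLoopBasedAt l v ↔ ∃ h : l ≠ [],
      l.IsChain (fun a b => U.src b ∈ U.rng a) ∧ U.src (l.head h) = v ∧
        v ∈ U.rng (l.getLast h) := by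
  simp only [IsLoopBasedAt, IsLoop, IsPath, chain_iff_isChain]
  constructor
  · rintro ⟨⟨⟨hne, hc⟩, _, hlast⟩, _, rfl⟩
    exact ⟨hne, hc, rfl, hlast⟩
  · rintro ⟨hne, hc, rfl, hlast⟩
    exact ⟨⟨⟨hne, hc⟩, hne, hlast⟩, hne, rfl⟩

theorem IsLoopBasedAt.of_append {p q : List U.E} {v : U.V} (hp : p ≠ []) (hq : q ≠ [])
    (h : U.IsLoopBasedAt (p ++ q) v) (hqv : U.src (q.head hq) = v) :
    U.IsLoopBasedAt p v ∧ U.IsLoopBasedAt q v := by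
  obtain ⟨_, hc, hhead, hlast⟩ := isLoopBasedAt_iff.mp h
  obtain ⟨hcp, hcq, hjoin⟩ := List.isChain_append.mp hc
  rw [List.head_append_of_ne_nil hp] at hhead
  rw [List.getLast_append_of_ne_nil _ hq] at hlast
  have hmid : v ∈ U.rng (p.getLast hp) := by
    rw [← hqv]
    exact hjoin _ (List.getLast?_eq_some_getLast hp) _ (List.head?_eq_some_head hq)
  exact ⟨isLoopBasedAt_iff.mpr ⟨hp, hcp, hhead, hmid⟩, isLoopBasedAt_iff.mpr ⟨hq, hcq, hqv, hlast⟩⟩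

theorem IsLoopBasedAt.exists_simple_prefix {l : List U.E} {v : U.V} (h : U.IsLoopBasedAt l v) :
    ∃ p q, l = p ++ q ∧ U.IsSimpleLoopBasedAt p v ∧ (q = [] ∨ U.IsLoopBasedAt q v) := by
  classical
  by_cases hret : ∃ i, 0 < i ∧ ∃ hi : i < l.length, U.src l[i] = v
  · obtain ⟨hpos, hlt, hv⟩ := Nat.find_spec hret
    set i := Nat.find hret
    have hp : l.take i ≠ [] := by rw [← List.length_pos_iff, List.length_take]; omega
    have hq : l.drop i ≠ [] := by rw [← List.length_pos_iff, List.length_drop]; omega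
    have hqv : U.src ((l.drop i).head hq) = v := by simpa [List.head_drop] using hv
    obtain ⟨hpl, hql⟩ := (List.take_append_drop i l ▸ h).of_append hp hq hqv
    refine ⟨l.take i, l.drop i, (List.take_append_drop i l).symm, ⟨hpl, ?_⟩, Or.inr hql⟩
    intro j hj hj0 hjv
    simp only [List.length_take, lt_min_iff, List.get_eq_getElem, List.getElem_take] at hj hjv
    exact Nat.find_min hret hj.1 ⟨Nat.pos_of_ne_zero hj0, hj.2, hjv⟩
  · push Not at hret
    refine ⟨l, [], (List.append_nil l).symm, ⟨h, ?_⟩, Or.inl rfl⟩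
    exact fun j hj hj0 => hret j (Nat.pos_of_ne_zero hj0) hj

theorem appendInf_of_lt (l : List U.E) (f : ℕ → U.E) {n : ℕ} (h : n < l.length) :
    U.appendInf l f n = l[n] := by
  simp [appendInf, h]

theorem appendInf_length_add (l : List U.E) (f : ℕ → U.E) (n : ℕ) :
    U.appendInf l f (l.length + n) = f n := by
  simp [appendInf]

theorem appendInf_append (a b : List U.E) (f : ℕ → U.E) :
    U.appendInf (a ++ b) f = U.appendInf a (U.appendInf b f) := by
  funext n
  simp only [appendInf, List.length_append, List.get_eq_getElem]
  by_cases ha : n < a.length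
  · rw [dif_pos (by omega), dif_pos ha, List.getElem_append_left ha]
  by_cases hab : n < a.length + b.length
  · rw [dif_pos hab, dif_neg ha, dif_pos (by omega), List.getElem_append_right (by omega)]
  · rw [dif_neg hab, dif_neg ha, dif_neg (by omega), Nat.sub_sub]

theorem appendInf_inj {l : List U.E} {f g : ℕ → U.E} :
    U.appendInf l f = U.appendInf l g ↔ f = g := by
  refine ⟨fun h => funext fun n => ?_, fun h => h ▸ rfl⟩
  simpa only [appendInf_length_add] using congrFun h (l.length + n)

theorem getElem_eq_of_appendInf_eq_self {l : List U.E} {w : ℕ → U.E}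
    (e : U.appendInf l w = w) {n : ℕ} (hn : n < l.length) : l[n] = w n := by
  rw [← U.appendInf_of_lt l w hn, e]

theorem perInf_zero (l : List U.E) (h : l ≠ []) : U.perInf l h 0 = l.head h := by
  simp [perInf, List.head_eq_getElem]

theorem appendInf_perInf (l : List U.E) (h : l ≠ []) :
    U.appendInf l (U.perInf l h) = U.perInf l h := by
  funext n
  simp only [appendInf, perInf, List.get_eq_getElem]
  split_ifs with hn
  · simp only [Nat.mod_eq_of_lt hn]
  · simp only [← Nat.mod_eq_sub_mod (not_lt.mp hn)]

theorem appendInf_append_perInf_eq_self_iff {γ : List U.E} (hγ : γ ≠ []) {ρ : List U.E} :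
    U.appendInf (γ ++ ρ) (U.perInf γ hγ) = U.perInf γ hγ ↔
      U.appendInf ρ (U.perInf γ hγ) = U.perInf γ hγ := by
  rw [appendInf_append, ← appendInf_inj (l := γ) (f := U.appendInf ρ _), appendInf_perInf]

theorem IsLoopBasedAt.appendInf_perInf_of_forall_simple_eq {l₀ : List U.E} (h₀ : l₀ ≠ [])
    {v : U.V} (huniq : ∀ l, U.IsSimpleLoopBasedAt l v → l = l₀) {ρ : List U.E}
    (hρ : U.IsLoopBasedAt ρ v) : U.appendInf ρ (U.perInf l₀ h₀) = U.perInf l₀ h₀ := by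
  induction hn : ρ.length using Nat.strong_induction_on generalizing ρ with
  | _ n ih =>
    obtain ⟨p, q, rfl, hp, hq⟩ := hρ.exists_simple_prefix
    obtain rfl := huniq p hp
    rcases hq with rfl | hq
    · rw [List.append_nil, appendInf_perInf]
    · have hlen : q.length < n := by
        rw [← hn, List.length_append, Nat.lt_add_left_iff_pos, List.length_pos_iff]; exact h₀
      rw [appendInf_append, ih _ hlen hq rfl, appendInf_perInf]

theorem IsSimpleLoopBasedAt.length_le {l₁ l₂ : List U.E} {v : U.V} {w : ℕ → U.E}
    (h₂ : U.IsSimpleLoopBasedAt l₂ v) (h₁ : l₁ ≠ []) (hw : U.src (w 0) = v)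
    (e₁ : U.appendInf l₁ w = w) (e₂ : U.appendInf l₂ w = w) : l₂.length ≤ l₁.length := by
  by_contra! hlt
  refine h₂.2 l₁.length hlt (List.length_pos_iff.mpr h₁).ne' ?_
  have hret := congrFun e₁ (l₁.length + 0)
  rw [appendInf_length_add, add_zero] at hret
  rw [List.get_eq_getElem, getElem_eq_of_appendInf_eq_self e₂, ← hret, hw]

theorem IsSimpleLoopBasedAt.eq_of_appendInf_eq_self {l₁ l₂ : List U.E} {v : U.V}
    {w : ℕ → U.E} (h₁ : U.IsSimpleLoopBasedAt l₁ v) (h₂ : U.IsSimpleLoopBasedAt l₂ v)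
    (hw : U.src (w 0) = v) (e₁ : U.appendInf l₁ w = w) (e₂ : U.appendInf l₂ w = w) :
    l₁ = l₂ := by
  refine List.ext_getElem ?_ fun n hn₁ hn₂ => ?_
  · exact le_antisymm (h₁.length_le h₂.1.1.1.1 hw e₂ e₁) (h₂.length_le h₁.1.1.1.1 hw e₁ e₂)
  · rw [getElem_eq_of_appendInf_eq_self e₁, getElem_eq_of_appendInf_eq_self e₂]

theorem isRecurrent_iff {γ : List U.E} (hγ : U.IsLoop γ) :
    U.IsRecurrent γ ↔ ∃ ρ, U.IsLoopBasedAt ρ (U.src (γ.head hγ.1.1)) ∧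
      U.appendInf ρ (U.perInf γ hγ.1.1) ≠ U.perInf γ hγ.1.1 := by
  constructor
  · rintro ⟨-, ρ, hρ, hγ₀, hρ₀, hsrc, hne⟩
    exact ⟨ρ, ⟨hρ, hρ₀, hsrc⟩, mt (appendInf_append_perInf_eq_self_iff hγ₀).mpr hne⟩
  · rintro ⟨ρ, ⟨hρ, hρ₀, hsrc⟩, hne⟩
    exact ⟨hγ, ρ, hρ, hγ.1.1, hρ₀, hsrc, mt (appendInf_append_perInf_eq_self_iff _).mp hne⟩

end Ultragraph

/-- **Statement 19.** Every loop in the ultragraph `𝒢` is recurrent if, and only if,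
`𝒢` satisfies Condition (K). -/
theorem every_loop_recurrent_iff_conditionK (U : Ultragraph) :
    (∀ γ : List U.E, U.IsLoop γ → U.IsRecurrent γ) ↔ U.ConditionK := by
  constructor
  · intro hrec v
    by_contra! hK
    obtain ⟨⟨l₀, hl₀⟩, huniq⟩ := hK
    obtain ⟨h₀, hv⟩ := hl₀.1.2
    obtain ⟨ρ, hρ, hne⟩ := (Ultragraph.isRecurrent_iff hl₀.1.1).mp (hrec l₀ hl₀.1.1)
    rw [hv] at hρ
    exact hne (hρ.appendInf_perInf_of_forall_simple_eq h₀ fun l hl => huniq l l₀ hl hl₀)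
  · intro hK γ hγ
    set v := U.src (γ.head hγ.1.1)
    have hγv : U.IsLoopBasedAt γ v := ⟨hγ, hγ.1.1, rfl⟩
    obtain ⟨p, -, -, hp, -⟩ := hγv.exists_simple_prefix
    obtain ⟨l₁, l₂, h₁, h₂, hne⟩ := (hK v).resolve_left fun h => h p hp
    rw [Ultragraph.isRecurrent_iff hγ]
    by_contra! hall
    exact hne (h₁.eq_of_appendInf_eq_self h₂ (by rw [Ultragraph.perInf_zero])
      (hall l₁ h₁.1) (hall l₂ h₂.1))
end
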